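/- As x → ∞: (a) √π · x · erfi(x) · exp(−x²) → 1; (b) Φ(x)/√(ln x) → 1; (c) 2x·φ(x)·√(ln x) → 1; consequently (d) 2x·Φ(x)·φ(x) → 1. -/

import Mathlib

open MeasureTheory Finset Filter

namespace TF

noncomputable section
open scoped Classical

/-- Edges of the complete graph on `Fin n` are elements of `Sym2 (Fin n)`. -/
abbrev Edge (n : ℕ) := Sym2 (Fin n)

/-- The edge set of the complete graph `K_n` (non-diagonal pairs). -/
def allEdges (n : ℕ) : Finset (Edge n) := Finset.univ.filter (fun e => ¬ e.IsDiag)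

/-- Three edges form a triangle. -/
def IsTri {n : ℕ} (e f g : Edge n) : Prop :=
  ∃ a b c : Fin n, a ≠ b ∧ b ≠ c ∧ a ≠ c ∧ e = s(a, b) ∧ f = s(b, c) ∧ g = s(a, c)

/-- An edge set is triangle-free. -/
def TriFree {n : ℕ} (T : Finset (Edge n)) : Prop :=
  ∀ e ∈ T, ∀ f ∈ T, ∀ g ∈ T, ¬ IsTri e f g

/-- Adding `e` to `T` does not create a triangle. -/
def AddOK {n : ℕ} (T : Finset (Edge n)) (e : Edge n) : Prop :=
  ∀ f ∈ T, ∀ g ∈ T, ¬ IsTri e f g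

/-- Traverse a list of edges, adding each to the current graph unless
its addition creates a triangle (or it is a loop). -/
def greedy {n : ℕ} (T : Finset (Edge n)) : List (Edge n) → Finset (Edge n)
  | [] => T
  | e :: l => if AddOK T e ∧ ¬ e.IsDiag then greedy (insert e T) l else greedy T l

/-- The edges of `s`, listed in increasing order of birthtime. -/
def sortByBirth {n : ℕ} (β : Edge n → ℝ) (s : Finset (Edge n)) : List (Edge n) :=
  s.toList.mergeSort (fun a b => β a ≤ β b)

/-- `δ := 1/⌊n^ε⌋`. -/
def del (n : ℕ) (ε : ℝ) : ℝ := 1 / (⌊(n : ℝ) ^ ε⌋₊ : ℝ)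

/-- `I := δ^{-2} = ⌊n^ε⌋²`. -/
def Inat (n : ℕ) (ε : ℝ) : ℕ := (⌊(n : ℝ) ^ ε⌋₊) ^ 2

/-- `M := n^{20000ε}`. -/
def Mc (n : ℕ) (ε : ℝ) : ℝ := (n : ℝ) ^ (20000 * ε)

/-- The imaginary error function `erfi(x) = (2/√π)∫₀ˣ exp(t²) dt`. -/
def erfi (x : ℝ) : ℝ := (2 / Real.sqrt Real.pi) * ∫ t in (0:ℝ)..x, Real.exp (t ^ 2)

/-- `Φ` is the inverse function of `y ↦ (√π/2)·erfi y`; equivalently it is the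
solution of `Φ(0) = 0`, `Φ'(x) = exp (-Φ(x)²)`. -/
def Phi : ℝ → ℝ := Function.invFun (fun y : ℝ => (Real.sqrt Real.pi / 2) * erfi y)

/-- `φ(x) := exp (-Φ(x)²)`, the derivative of `Φ`. -/
def phi (x : ℝ) : ℝ := Real.exp (-(Phi x) ^ 2)

/-- `m := ⌊n^{100ε}⌋·φ(iδ)⁻¹`. -/
def mc (n : ℕ) (ε : ℝ) (i : ℕ) : ℝ := (⌊(n : ℝ) ^ (100 * ε)⌋₊ : ℝ) * (phi (i * del n ε))⁻¹

/-- `γ(i) := max{δΦ(iδ)φ(iδ), δ²φ(iδ)²}`. -/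
def gam (n : ℕ) (ε : ℝ) (i : ℕ) : ℝ :=
  max (del n ε * Phi (i * del n ε) * phi (i * del n ε))
      (del n ε ^ 2 * phi (i * del n ε) ^ 2)

/-- `Γ(0) := n^{-30ε}`, `Γ(i) := Γ(i-1)(1 + 10γ(i-1))`. -/
def Gam (n : ℕ) (ε : ℝ) : ℕ → ℝ
  | 0 => (n : ℝ) ^ (-30 * ε)
  | i + 1 => Gam n ε i * (1 + 10 * gam n ε i)

/-- `x = a(1 ± b)`, i.e. `a(1-b) ≤ x ≤ a(1+b)`. -/
def within (x a b : ℝ) : Prop := a * (1 - b) ≤ x ∧ x ≤ a * (1 + b)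

/-- The uniform probability measure on a set of reals. -/
def unif (s : Set ℝ) : Measure ℝ := (volume s)⁻¹ • volume.restrict s

/-- The product measure under which every edge of `K_n` receives an
independent uniform birthtime in `[0,1]`. -/
def stepMeasure (n : ℕ) : Measure (Edge n → ℝ) :=
  Measure.pi fun _ => unif (Set.Icc 0 1)

/-- `Λ₀(g,i)`: pairs `{g₁,g₂} ⊆ TF_i` forming a triangle with `g`. -/
def Lam0 {n : ℕ} (TFi : Finset (Edge n)) (g : Edge n) : Finset (Finset (Edge n)) :=
  (TFi.powersetCard 2).filter
    (fun P => ∃ g1 ∈ P, ∃ g2 ∈ P, g1 ≠ g2 ∧ IsTri g g1 g2)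

/-- `Λ₁(g,i)`: singletons (identified with edges) `g₁ ∉ B_{≤i}` such that some
`g₂ ∈ TF_i` makes `{g,g₁,g₂}` a triangle and `TF_i ∪ {g₁}` is triangle-free. -/
def Lam1 {n : ℕ} (TFi Bprev : Finset (Edge n)) (g : Edge n) : Finset (Edge n) :=
  (allEdges n \ Bprev).filter
    (fun g1 => (∃ g2 ∈ TFi, IsTri g g1 g2) ∧ TriFree (insert g1 TFi))

/-- `Λ₂(g,i)`: pairs `{g₁,g₂} ⊆ K_n ∖ B_{≤i}` forming a triangle with `g`
such that `TF_i ∪ {g_j}` is triangle-free for both `j ∈ {1,2}`. -/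
def Lam2 {n : ℕ} (TFi Bprev : Finset (Edge n)) (g : Edge n) : Finset (Finset (Edge n)) :=
  ((allEdges n \ Bprev).powersetCard 2).filter
    (fun P => (∃ g1 ∈ P, ∃ g2 ∈ P, g1 ≠ g2 ∧ IsTri g g1 g2) ∧
      ∀ f ∈ P, TriFree (insert f TFi))

/-- The process is well-behaved at step `i` (the precondition of the
key lemma), for a given instance `(TF_i, B_{≤i})`. -/
def WellBehaved (n : ℕ) (ε : ℝ) (i : ℕ) (TFi Bprev : Finset (Edge n)) : Prop :=
  (∀ g ∈ allEdges n, ((Lam0 TFi g).card : ℝ) ≤ i * (n : ℝ) ^ (5 * ε) ∧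
      ((Lam1 TFi Bprev g).card : ℝ) ≤ i * Real.sqrt n) ∧
  (∀ g ∈ allEdges n \ Bprev,
    within ((Lam1 TFi Bprev g).card : ℝ)
      (2 * Real.sqrt n * Phi (i * del n ε) * phi (i * del n ε)) (Gam n ε i) ∧
    within ((Lam2 TFi Bprev g).card : ℝ)
      ((n : ℝ) * phi (i * del n ε) ^ 2) (Gam n ε i))

/-- Structural properties of any instance of the state `(TF_i, B_{≤i})` of the
process: `TF_i ⊆ B_{≤i} ⊆ K_n` and `TF_i` is triangle-free. -/
def Instance (n : ℕ) (TFi Bprev : Finset (Edge n)) : Prop :=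
  TFi ⊆ Bprev ∧ Bprev ⊆ allEdges n ∧ TriFree TFi

/-- The set `B_{i+1}` determined by the fresh birthtimes `β = β_{i+1}`. -/
def Bnext (n : ℕ) (ε : ℝ) (Bprev : Finset (Edge n)) (β : Edge n → ℝ) : Finset (Edge n) :=
  (allEdges n \ Bprev).filter (fun f => β f < del n ε * (n : ℝ) ^ (-(1:ℝ)/2))

/-- The graph `TF_{i+1}`, obtained by traversing the edges of `B_{i+1}` in
increasing order of birthtime, adding each unless a triangle is created. -/
def TFnext (n : ℕ) (ε : ℝ) (TFi Bprev : Finset (Edge n)) (β : Edge n → ℝ) : Finset (Edge n) :=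
  greedy TFi (sortByBirth β (Bnext n ε Bprev β))

/-- `B^⋆_{i+1}` as a function of the birthtimes: the edges outside `B_{≤i}`
with birthtime below `M·n^{-1/2}`. -/
def BstarOf (n : ℕ) (ε : ℝ) (Bprev : Finset (Edge n)) (β : Edge n → ℝ) : Finset (Edge n) :=
  (allEdges n \ Bprev).filter (fun f => β f < Mc n ε * (n : ℝ) ^ (-(1:ℝ)/2))

/-- `B^*_{i+1}` as a function of the birthtimes: the edges outside `B_{≤i}`
with birthtime below `m·n^{-1/2}`. -/
def BsubOf (n : ℕ) (ε : ℝ) (i : ℕ) (Bprev : Finset (Edge n)) (β : Edge n → ℝ) : Finset (Edge n) :=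
  (allEdges n \ Bprev).filter (fun f => β f < mc n ε i * (n : ℝ) ^ (-(1:ℝ)/2))

/-- `Λ^⋆₁`-type family: members of `Λ₁` contained in the selected edge set. -/
def LamS1 {n : ℕ} (TFi Bprev Bsel : Finset (Edge n)) (g : Edge n) : Finset (Edge n) :=
  (Lam1 TFi Bprev g).filter (fun e => e ∈ Bsel)

/-- `Λ^⋆₂`-type family: members of `Λ₂` contained in the selected edge set. -/
def LamS2 {n : ℕ} (TFi Bprev Bsel : Finset (Edge n)) (g : Edge n) : Finset (Finset (Edge n)) :=
  (Lam2 TFi Bprev g).filter (fun P => P ⊆ Bsel)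

/-- `Λ^{⋆⋆}₂`: members of `Λ₂` meeting the selected edge set in one edge. -/
def LamSS2 {n : ℕ} (TFi Bprev Bsel : Finset (Edge n)) (g : Edge n) : Finset (Finset (Edge n)) :=
  (Lam2 TFi Bprev g).filter (fun P => (P ∩ Bsel).card = 1)

/-- The event `E^⋆(h)`: properties P1–P4. -/
def Estar (n : ℕ) (ε : ℝ) (i : ℕ) (TFi Bprev Bstar : Finset (Edge n)) (h : ℝ) : Prop :=
  (∀ g ∈ allEdges n \ Bprev,
    within ((LamS1 TFi Bprev Bstar g).card : ℝ)
      (2 * Mc n ε * Phi (i * del n ε) * phi (i * del n ε))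
      (Gam n ε i + h * Gam n ε i * gam n ε i) ∧
    within ((LamS2 TFi Bprev Bstar g).card : ℝ)
      (Mc n ε ^ 2 * phi (i * del n ε) ^ 2)
      (Gam n ε i + h * Gam n ε i * gam n ε i) ∧
    within ((LamSS2 TFi Bprev Bstar g).card : ℝ)
      (2 * Mc n ε * Real.sqrt n * phi (i * del n ε) ^ 2)
      (Gam n ε i + h * Gam n ε i * gam n ε i)) ∧
  (∀ w x y : Fin n, w ≠ x → x ≠ y → w ≠ y →
    s(w, x) ∉ Bprev → s(x, y) ∉ Bprev →
    (((Finset.univ.filter (fun z : Fin n => z ≠ w ∧ z ≠ x ∧ z ≠ y ∧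
        s(w, z) ∈ TFi ∧ s(y, z) ∈ TFi ∧ s(x, z) ∈ Bstar)).card : ℝ) ≤ Real.log n ^ 2 ∧
     ((Finset.univ.filter (fun z : Fin n => z ≠ w ∧ z ≠ x ∧ z ≠ y ∧
        s(w, z) ∈ TFi ∧ s(x, z) ∈ Bstar ∧ s(y, z) ∈ Bstar)).card : ℝ) ≤ Real.log n ^ 2 ∧
     ((Finset.univ.filter (fun z : Fin n => z ≠ w ∧ z ≠ x ∧ z ≠ y ∧
        s(w, z) ∈ TFi ∧ s(x, z) ∉ Bprev ∧ s(y, z) ∈ Bstar)).card : ℝ) ≤ Mc n ε ^ 2)) ∧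
  (∀ x y : Fin n, x ≠ y →
    ((Finset.univ.filter (fun z : Fin n => z ≠ x ∧ z ≠ y ∧
        s(x, z) ∈ Bstar ∧ s(y, z) ∈ Bstar)).card : ℝ) ≤ 2 * Mc n ε ^ 2) ∧
  (∀ x : Fin n,
    ((Finset.univ.filter (fun y : Fin n => y ≠ x ∧ s(x, y) ∈ Bstar)).card : ℝ)
      ≤ 2 * Mc n ε * Real.sqrt n)

/-- The children (labeled by sets of edges) of a tree node labeled `g` whose
grandparent is labeled `prev`, in the tree built from the selected edge set
`Bsel` (`Bsel = B^⋆_{i+1}` gives `T^⋆`, `Bsel = B^*_{i+1}` gives `T^*`). -/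
def childSets {n : ℕ} (TFi Bprev Bsel : Finset (Edge n)) (g : Edge n) :
    Option (Edge n) → Finset (Finset (Edge n))
  | none => (LamS1 TFi Bprev Bsel g).image (fun e => {e}) ∪ LamS2 TFi Bprev Bsel g
  | some g' => ((LamS2 TFi Bprev Bsel g).filter (fun G => g' ∉ G)) ∪
      ((LamS1 TFi Bprev Bsel g).filter
        (fun e => e ≠ g' ∧ ¬ IsTri e g g')).image (fun e => {e})

/-- Survival of a tree node labeled `g` with grandparent label `prev`, when
the birthtime of the node's label is `b` and `l` further generations follow:
a non-leaf node survives iff for every child `G` all of whose edges have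
birthtime below `min{b, δn^{-1/2}}`, some child of `G` does not survive. -/
def surv (n : ℕ) (ε : ℝ) (TFi Bprev Bsel : Finset (Edge n)) (β : Edge n → ℝ) :
    ℕ → Edge n → Option (Edge n) → ℝ → Prop
  | 0, _, _, _ => True
  | l + 1, g, prev, b => ∀ G ∈ childSets TFi Bprev Bsel g prev,
      (∀ f ∈ G, β f < min b (del n ε * (n : ℝ) ^ (-(1:ℝ)/2))) →
      ∃ f ∈ G, ¬ surv n ε TFi Bprev Bsel β l f (some g) (β f)

/-- The event `A_{g,l}`: the root of `T_{g,l}` survives. -/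
def Aev (n : ℕ) (ε : ℝ) (TFi Bprev Bsel : Finset (Edge n)) (β : Edge n → ℝ)
    (l : ℕ) (g : Edge n) : Prop :=
  surv n ε TFi Bprev Bsel β l g none (β g)

/-- The event `A_{F,l} := ∩_{f ∈ F} A_{f,l}`. -/
def AevF (n : ℕ) (ε : ℝ) (TFi Bprev Bsel : Finset (Edge n)) (β : Edge n → ℝ)
    (l : ℕ) (F : Finset (Edge n)) : Prop :=
  ∀ f ∈ F, Aev n ε TFi Bprev Bsel β l f

/-- The conditional distribution of the birthtimes `β_{i+1}` given that
`B^⋆_{i+1} = Bstar` was chosen, that the edges of `F1` fall in `B_{i+1}`,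
and that the edges of `Fex` do not fall in `B_{i+1}`. -/
def condM (n : ℕ) (ε : ℝ) (Bprev Bstar F1 Fex : Finset (Edge n)) : Measure (Edge n → ℝ) :=
  Measure.pi fun e =>
    if e ∈ F1 then unif (Set.Ico 0 (del n ε * (n : ℝ) ^ (-(1:ℝ)/2)))
    else if e ∈ Fex then
      (if e ∈ Bstar then
          unif (Set.Ico (del n ε * (n : ℝ) ^ (-(1:ℝ)/2)) (Mc n ε * (n : ℝ) ^ (-(1:ℝ)/2)))
        else unif (Set.Ioc (Mc n ε * (n : ℝ) ^ (-(1:ℝ)/2)) 1))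
    else if e ∈ Bstar then unif (Set.Ico 0 (Mc n ε * (n : ℝ) ^ (-(1:ℝ)/2)))
    else if e ∈ Bprev then unif (Set.Icc 0 1)
    else unif (Set.Ioc (Mc n ε * (n : ℝ) ^ (-(1:ℝ)/2)) 1)

/-- As `condM`, but additionally given that `B^*_{i+1} = Bsub` was chosen. -/
def condM2 (n : ℕ) (ε : ℝ) (i : ℕ) (Bprev Bstar Bsub F1 Fex : Finset (Edge n)) :
    Measure (Edge n → ℝ) :=
  Measure.pi fun e =>
    if e ∈ F1 then unif (Set.Ico 0 (del n ε * (n : ℝ) ^ (-(1:ℝ)/2)))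
    else if e ∈ Fex then
      (if e ∈ Bsub then
          unif (Set.Ico (del n ε * (n : ℝ) ^ (-(1:ℝ)/2)) (mc n ε i * (n : ℝ) ^ (-(1:ℝ)/2)))
        else if e ∈ Bstar then
          unif (Set.Ico (mc n ε i * (n : ℝ) ^ (-(1:ℝ)/2)) (Mc n ε * (n : ℝ) ^ (-(1:ℝ)/2)))
        else unif (Set.Ioc (Mc n ε * (n : ℝ) ^ (-(1:ℝ)/2)) 1))
    else if e ∈ Bsub then unif (Set.Ico 0 (mc n ε i * (n : ℝ) ^ (-(1:ℝ)/2)))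
    else if e ∈ Bstar then
      unif (Set.Ico (mc n ε i * (n : ℝ) ^ (-(1:ℝ)/2)) (Mc n ε * (n : ℝ) ^ (-(1:ℝ)/2)))
    else if e ∈ Bprev then unif (Set.Icc 0 1)
    else unif (Set.Ioc (Mc n ε * (n : ℝ) ^ (-(1:ℝ)/2)) 1)

/-- A descending path of labels from a (root) node labeled `g` whose
grandparent label is `prev`: each step records the label of a set-node
together with the label of one of its edge-children. -/
def chain {n : ℕ} (TFi Bprev Bsel : Finset (Edge n)) :
    Edge n → Option (Edge n) → List (Finset (Edge n) × Edge n) → Prop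
  | _, _, [] => True
  | g, prev, (G, g') :: rest =>
      G ∈ childSets TFi Bprev Bsel g prev ∧ g' ∈ G ∧ chain TFi Bprev Bsel g' (some g) rest

/-- The (edge) label of the node-at-even-distance reached by a path. -/
def lbl {n : ℕ} (f : Edge n) (path : List (Finset (Edge n) × Edge n)) : Edge n :=
  (path.map Prod.snd).getLastD f

/-- The label of the grandparent of the node reached by a path. -/
def prevLbl {n : ℕ} (f : Edge n) (path : List (Finset (Edge n) × Edge n)) : Option (Edge n) :=
  if path.isEmpty then none else some (lbl f path.dropLast)

/-- The event `E^*_F`: an edge labeling a node at even distance from the root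
of a tree of `T^*_{F,L}` labels no other such node. -/
def EstarF (n : ℕ) (TFi Bprev Bsub : Finset (Edge n)) (L : ℕ) (F : Finset (Edge n)) : Prop :=
  ∀ f ∈ F, ∀ f' ∈ F, ∀ path path' : List (Finset (Edge n) × Edge n),
    chain TFi Bprev Bsub f none path → chain TFi Bprev Bsub f' none path' →
    path.length ≤ L → path'.length ≤ L →
    lbl f path = lbl f' path' → f = f' ∧ path = path'

/-- The event `E^*`. -/
def EstarSub (n : ℕ) (ε : ℝ) (i : ℕ) (TFi Bprev Bsub : Finset (Edge n)) : Prop :=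
  ∀ g ∈ allEdges n \ Bprev,
    within ((LamS1 TFi Bprev Bsub g).card : ℝ)
      (2 * mc n ε i * Phi (i * del n ε) * phi (i * del n ε)) (1.01 * Gam n ε i) ∧
    within ((LamS2 TFi Bprev Bsub g).card : ℝ)
      (mc n ε i ^ 2 * phi (i * del n ε) ^ 2) (1.01 * Gam n ε i)

/-- The iterates `p_l` of the limiting survival recursion (with `c1 = φ(iδ)`
and `c2 = Φ(iδ)`): `p₀ ≡ 1` and
`p_{l+1}(x) = exp(-P_l(x)²c₁² - 2P_l(x)c₂c₁)` where `P_l(x) := ∫₀ˣ p_l`. -/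
def plim (c1 c2 : ℝ) : ℕ → ℝ → ℝ
  | 0 => fun _ => 1
  | l + 1 => fun x =>
      Real.exp (-(∫ y in (0:ℝ)..x, plim c1 c2 l y) ^ 2 * c1 ^ 2 -
        2 * (∫ y in (0:ℝ)..x, plim c1 c2 l y) * c2 * c1)

/-- The staged triangle-free process: `stage i = (TF_i, B_{≤i})`. -/
def stage (n : ℕ) (ε : ℝ) (β : ℕ → Edge n → ℝ) : ℕ → Finset (Edge n) × Finset (Edge n)
  | 0 => (∅, ∅)
  | i + 1 =>
      let p := stage n ε β i
      (TFnext n ε p.1 p.2 (β (i + 1)), p.2 ∪ Bnext n ε p.2 (β (i + 1)))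

/-- The sample space for the stages `0,…,I` of the process: independent
uniform birthtimes in `[0,1]` for every stage and every edge. -/
def stagesMeasure (n : ℕ) (ε : ℝ) : Measure (Fin (Inat n ε + 1) → Edge n → ℝ) :=
  Measure.pi fun _ => stepMeasure n

/-- Extend a finitely-indexed family of birthtimes to all stages. -/
def extendB (n : ℕ) (ε : ℝ) (ω : Fin (Inat n ε + 1) → Edge n → ℝ) : ℕ → Edge n → ℝ :=
  fun k => if h : k < Inat n ε + 1 then ω ⟨k, h⟩ else fun _ => 0

/-- `TF_I` as a function of the birthtimes. -/
def TFI (n : ℕ) (ε : ℝ) (ω : Fin (Inat n ε + 1) → Edge n → ℝ) : Finset (Edge n) :=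
  (stage n ε (extendB n ε ω) (Inat n ε)).1

/-- The final graph `TF(n)` of the (one-shot) triangle-free process. -/
def TFone (n : ℕ) (β : Edge n → ℝ) : Finset (Edge n) :=
  greedy ∅ (sortByBirth β (allEdges n))

/-- `TF(n,p) := TF(n) ∩ {f : β(f) ≤ p}`. -/
def TFnp (n : ℕ) (β : Edge n → ℝ) (p : ℝ) : Finset (Edge n) :=
  (TFone n β).filter (fun f => β f ≤ p)

/-- `Fn` is a copy of the graph `F` inside `K_n`. -/
def IsCopy {V : Type*} (F : SimpleGraph V) {n : ℕ} (Fn : Finset (Edge n)) : Prop :=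
  ∃ φ : V → Fin n, Function.Injective φ ∧
    (∀ e, e ∈ Fn ↔ ∃ a b, F.Adj a b ∧ e = s(φ a, φ b))

/-- The number of copies of `F` in the graph on `Fin n` with edge set `T`
(= #{injective adjacency-preserving maps} / #{automorphisms of F}). -/
def numCopies {V : Type*} [Fintype V] (F : SimpleGraph V) {n : ℕ} (T : Finset (Edge n)) : ℝ :=
  (Nat.card {φ : V → Fin n // Function.Injective φ ∧
      ∀ a b, F.Adj a b → s(φ a, φ b) ∈ T} : ℝ) / (Nat.card (F ≃g F) : ℝ)

/-- The number of edges `e_F` of a graph `F`. -/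
def eCard {V : Type*} (F : SimpleGraph V) : ℕ := Nat.card F.edgeSet

/-- `F` is balanced: `e_F/v_F ≥ e_H/v_H` for every subgraph `H ⊆ F`
with at least one vertex. -/
def Balanced {V : Type*} [Fintype V] (F : SimpleGraph V) : Prop :=
  ∀ H : F.Subgraph, H.verts.Nonempty →
    (Nat.card H.edgeSet : ℝ) / (Nat.card H.verts : ℝ) ≤
      (eCard F : ℝ) / (Fintype.card V : ℝ)

end

end TF

namespace TF
noncomputable section
open scoped Classical
open Real

/-!
Write `F y = ∫₀ʸ exp (t²) = (√π/2)·erfi y`, so that `Φ` is the inverse of `F`. Comparing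
`exp (t²)` with `t·exp (t²)/c`, which has an explicit primitive, on `[0, y]` and on `[y - 1, y]`
squeezes `2y·F(y)·exp (-y²)` between `1 - exp (-y²)` and `2y²·exp (1 - 2y) + y/(y - 1)`,
both of which tend to `1`: this is (a). Taking logarithms, `log F(y) ~ y²`, i.e. `Φ(x)² ~ log x`,
which is (b). Substituting `y = Φ(x)` in (a) gives (d), and (c) is (d) divided by (b).
-/

def integralExpSq (y : ℝ) : ℝ := ∫ t in (0 : ℝ)..y, exp (t ^ 2)

lemma erfi_eq_two_div_sqrt_pi_mul (y : ℝ) : erfi y = 2 / √π * integralExpSq y := rfl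

lemma continuous_exp_sq : Continuous fun t : ℝ => exp (t ^ 2) := by fun_prop

lemma continuous_mul_exp_sq : Continuous fun t : ℝ => t * exp (t ^ 2) := by fun_prop

lemma hasDerivAt_integralExpSq (y : ℝ) : HasDerivAt integralExpSq (exp (y ^ 2)) y :=
  (continuous_exp_sq.integral_hasStrictDerivAt 0 y).hasDerivAt

lemma strictMono_integralExpSq : StrictMono integralExpSq :=
  strictMono_of_hasDerivAt_pos hasDerivAt_integralExpSq fun _ => exp_pos _

lemma monotone_integralExpSq_sub_self : Monotone fun y => integralExpSq y - y :=
  monotone_of_hasDerivAt_nonneg (fun y => (hasDerivAt_integralExpSq y).sub (hasDerivAt_id y))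
    fun y => sub_nonneg.mpr (one_le_exp (sq_nonneg y))

lemma self_le_integralExpSq {y : ℝ} (hy : 0 ≤ y) : y ≤ integralExpSq y := by
  simpa [integralExpSq] using monotone_integralExpSq_sub_self hy

lemma integralExpSq_le_self {y : ℝ} (hy : y ≤ 0) : integralExpSq y ≤ y := by
  simpa [integralExpSq] using monotone_integralExpSq_sub_self hy

lemma surjective_integralExpSq : Function.Surjective integralExpSq := by
  refine Continuous.surjective ?_ ?_ ?_
  · exact continuous_iff_continuousAt.mpr fun y => (hasDerivAt_integralExpSq y).continuousAt
  · exact tendsto_atTop_mono' _ ((eventually_ge_atTop 0).mono fun _ => self_le_integralExpSq)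
      tendsto_id
  · exact tendsto_atBot_mono' _ ((eventually_le_atBot 0).mono fun _ => integralExpSq_le_self)
      tendsto_id

lemma integralExpSq_Phi (x : ℝ) : integralExpSq (Phi x) = x := by
  have : (fun y => √π / 2 * erfi y) = integralExpSq := by
    funext y
    rw [erfi_eq_two_div_sqrt_pi_mul]
    field_simp
  rw [Phi, this]
  exact Function.rightInverse_invFun surjective_integralExpSq x

lemma tendsto_Phi_atTop : Tendsto Phi atTop atTop :=
  tendsto_atTop_atTop.mpr fun b => ⟨integralExpSq b, fun x hx =>
    strictMono_integralExpSq.le_iff_le.mp (by rwa [integralExpSq_Phi])⟩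

lemma integral_mul_exp_sq (a b : ℝ) :
    ∫ t in a..b, t * exp (t ^ 2) = (exp (b ^ 2) - exp (a ^ 2)) / 2 := by
  rw [intervalIntegral.integral_eq_sub_of_hasDerivAt (f := fun t => exp (t ^ 2) / 2)
    (fun t _ => ((hasDerivAt_pow 2 t).exp.div_const 2).congr_deriv (by norm_num; ring))
    (continuous_mul_exp_sq.intervalIntegrable a b)]
  ring

lemma div_le_integral_exp_sq {a b : ℝ} (hab : a ≤ b) (hb : 0 < b) :
    (exp (b ^ 2) - exp (a ^ 2)) / (2 * b) ≤ ∫ t in a..b, exp (t ^ 2) := by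
  have h := intervalIntegral.integral_mono_on (μ := volume) hab
    ((continuous_mul_exp_sq.const_mul b⁻¹).intervalIntegrable a b)
    (continuous_exp_sq.intervalIntegrable a b) fun t ht => by
      rw [← mul_assoc]
      exact mul_le_of_le_one_left (exp_pos _).le ((inv_mul_le_one₀ hb).mpr ht.2)
  rw [intervalIntegral.integral_const_mul, integral_mul_exp_sq] at h
  convert h using 1
  field_simp

lemma integral_exp_sq_le_div {a b : ℝ} (hab : a ≤ b) (ha : 0 < a) :
    ∫ t in a..b, exp (t ^ 2) ≤ (exp (b ^ 2) - exp (a ^ 2)) / (2 * a) := by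
  have h := intervalIntegral.integral_mono_on (μ := volume) hab
    (continuous_exp_sq.intervalIntegrable a b)
    ((continuous_mul_exp_sq.const_mul a⁻¹).intervalIntegrable a b) fun t ht => by
      rw [← mul_assoc]
      exact le_mul_of_one_le_left (exp_pos _).le ((one_le_inv_mul₀ ha).mpr ht.1)
  rw [intervalIntegral.integral_const_mul, integral_mul_exp_sq] at h
  convert h using 1
  field_simp

lemma integralExpSq_le_mul_exp_sq {a : ℝ} (ha : 0 ≤ a) :
    integralExpSq a ≤ a * exp (a ^ 2) := by
  have h := intervalIntegral.integral_mono_on (μ := volume) ha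
    (continuous_exp_sq.intervalIntegrable 0 a) intervalIntegrable_const
    fun t ht => exp_le_exp.mpr (pow_le_pow_left₀ ht.1 ht.2 2)
  simpa [integralExpSq] using h

lemma one_sub_exp_neg_sq_le {y : ℝ} (hy : 0 < y) :
    1 - exp (-y ^ 2) ≤ 2 * y * integralExpSq y * exp (-y ^ 2) := by
  have h := div_le_integral_exp_sq hy.le hy
  rw [div_le_iff₀ (by positivity)] at h
  calc 1 - exp (-y ^ 2) = (exp (y ^ 2) - exp ((0 : ℝ) ^ 2)) * exp (-y ^ 2) := by
        rw [sub_mul, ← exp_add]; simp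
    _ ≤ 2 * y * integralExpSq y * exp (-y ^ 2) := by
        rw [integralExpSq, mul_comm (2 * y)]; gcongr

lemma le_sq_mul_exp_add_div {y : ℝ} (hy : 1 < y) :
    2 * y * integralExpSq y * exp (-y ^ 2) ≤ 2 * y ^ 2 * exp (1 - 2 * y) + y / (y - 1) := by
  have hy1 : 0 < y - 1 := sub_pos.mpr hy
  have hsplit : integralExpSq y = integralExpSq (y - 1) + ∫ t in (y - 1)..y, exp (t ^ 2) :=
    (intervalIntegral.integral_add_adjacent_intervals (continuous_exp_sq.intervalIntegrable _ _)
      (continuous_exp_sq.intervalIntegrable _ _)).symm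
  have hhead := integralExpSq_le_mul_exp_sq hy1.le
  have htail : ∫ t in (y - 1)..y, exp (t ^ 2) ≤ exp (y ^ 2) / (2 * (y - 1)) :=
    (integral_exp_sq_le_div (sub_le_self y zero_le_one) hy1).trans
      (by gcongr; linarith [exp_pos ((y - 1) ^ 2)])
  have hexp : exp ((y - 1) ^ 2) * exp (-y ^ 2) = exp (1 - 2 * y) := by
    rw [← exp_add]; ring_nf
  have hexp' : exp (y ^ 2) * exp (-y ^ 2) = 1 := by
    rw [← exp_add, add_neg_cancel, exp_zero]
  calc 2 * y * integralExpSq y * exp (-y ^ 2)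
      ≤ 2 * y * ((y - 1) * exp ((y - 1) ^ 2) + exp (y ^ 2) / (2 * (y - 1))) * exp (-y ^ 2) := by
        rw [hsplit]
        gcongr 2 * y * ?_ * _
        exact add_le_add hhead htail
    _ = 2 * y * (y - 1) * (exp ((y - 1) ^ 2) * exp (-y ^ 2))
          + y / (y - 1) * (exp (y ^ 2) * exp (-y ^ 2)) := by
        field_simp
    _ ≤ 2 * y ^ 2 * exp (1 - 2 * y) + y / (y - 1) := by
        rw [hexp, hexp', mul_one]
        gcongr ?_ * _ + _
        nlinarith

lemma tendsto_sq_mul_exp_one_sub_two_mul :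
    Tendsto (fun y : ℝ => 2 * y ^ 2 * exp (1 - 2 * y)) atTop (nhds 0) := by
  have h := ((tendsto_pow_mul_exp_neg_atTop_nhds_zero 2).comp
    (tendsto_id.const_mul_atTop two_pos)).const_mul (exp 1 / 2)
  rw [mul_zero] at h
  refine h.congr fun y => ?_
  simp only [Function.comp_apply, id, sub_eq_add_neg, exp_add]
  ring

lemma tendsto_div_sub_one_atTop : Tendsto (fun y : ℝ => y / (y - 1)) atTop (nhds 1) := by
  have h := (tendsto_const_nhds (x := (1 : ℝ)).sub tendsto_inv_atTop_zero).inv₀ (by norm_num)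
  rw [sub_zero, inv_one] at h
  refine h.congr' ((eventually_gt_atTop 1).mono fun y hy => ?_)
  field_simp [(sub_pos.mpr hy).ne', (zero_lt_one.trans hy).ne']

theorem tendsto_two_mul_mul_integralExpSq_mul_exp_neg_sq :
    Tendsto (fun y => 2 * y * integralExpSq y * exp (-y ^ 2)) atTop (nhds 1) := by
  have lower : Tendsto (fun y : ℝ => 1 - exp (-y ^ 2)) atTop (nhds 1) := by
    simpa using tendsto_const_nhds.sub
      (tendsto_exp_neg_atTop_nhds_zero.comp (tendsto_pow_atTop two_ne_zero))
  have upper := tendsto_sq_mul_exp_one_sub_two_mul.add tendsto_div_sub_one_atTop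
  rw [zero_add] at upper
  exact tendsto_of_tendsto_of_tendsto_of_le_of_le' lower upper
    ((eventually_gt_atTop 0).mono fun _ => one_sub_exp_neg_sq_le)
    ((eventually_gt_atTop 1).mono fun _ => le_sq_mul_exp_add_div)

lemma tendsto_log_div_sq_atTop : Tendsto (fun y : ℝ => log y / y ^ 2) atTop (nhds 0) := by
  have h := (tendsto_pow_log_div_mul_add_atTop 1 0 1 one_ne_zero).mul tendsto_inv_atTop_zero
  rw [mul_zero] at h
  refine h.congr fun y => ?_
  simp only [pow_one, one_mul, add_zero]
  ring

lemma tendsto_log_integralExpSq_div_sq :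
    Tendsto (fun y => log (integralExpSq y) / y ^ 2) atTop (nhds 1) := by
  have hsq : Tendsto (fun y : ℝ => y ^ 2) atTop atTop := tendsto_pow_atTop two_ne_zero
  have hlog : Tendsto (fun y => log (2 * y * integralExpSq y * exp (-y ^ 2)) / y ^ 2)
      atTop (nhds 0) := by
    have := (continuousAt_log one_ne_zero).tendsto.comp
      tendsto_two_mul_mul_integralExpSq_mul_exp_neg_sq
    rw [log_one] at this
    exact this.div_atTop hsq
  have h := ((hlog.sub (tendsto_const_nhds (x := log 2).div_atTop hsq)).sub
    tendsto_log_div_sq_atTop).add_const 1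
  rw [sub_zero, sub_zero, zero_add] at h
  refine h.congr' ((eventually_gt_atTop 0).mono fun y hy => ?_)
  have hF : 0 < integralExpSq y := hy.trans_le (self_le_integralExpSq hy.le)
  rw [log_mul (by positivity) (exp_pos _).ne', log_mul (by positivity) hF.ne',
    log_mul two_ne_zero hy.ne', log_exp]
  field_simp
  ring

lemma tendsto_div_sqrt_log_integralExpSq :
    Tendsto (fun y => y / √(log (integralExpSq y))) atTop (nhds 1) := by
  have h := tendsto_log_integralExpSq_div_sq.sqrt.inv₀ (by norm_num)
  rw [sqrt_one, inv_one] at h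
  refine h.congr' ((eventually_ge_atTop 1).mono fun y hy => ?_)
  have hlog : 0 ≤ log (integralExpSq y) :=
    log_nonneg (hy.trans (self_le_integralExpSq (zero_le_one.trans hy)))
  rw [sqrt_div hlog, sqrt_sq (zero_le_one.trans hy), inv_div]

/-- As `x → ∞`: `√π·x·erfi(x)·exp(-x²) → 1`,
`Φ(x)/√(ln x) → 1`, `2x·φ(x)·√(ln x) → 1` and `2x·Φ(x)·φ(x) → 1`. -/
theorem erfi_Phi_asymptotics :
    Tendsto (fun x : ℝ => Real.sqrt Real.pi * x * erfi x * Real.exp (-x ^ 2))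
      atTop (nhds 1) ∧
    Tendsto (fun x : ℝ => Phi x / Real.sqrt (Real.log x)) atTop (nhds 1) ∧
    Tendsto (fun x : ℝ => 2 * x * phi x * Real.sqrt (Real.log x)) atTop (nhds 1) ∧
    Tendsto (fun x : ℝ => 2 * x * Phi x * phi x) atTop (nhds 1) := by
  have key := tendsto_two_mul_mul_integralExpSq_mul_exp_neg_sq
  have ha : Tendsto (fun x : ℝ => √π * x * erfi x * exp (-x ^ 2)) atTop (nhds 1) :=
    key.congr fun x => by
      rw [erfi_eq_two_div_sqrt_pi_mul]
      field_simp [(sqrt_pos.mpr pi_pos).ne']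
  have hb : Tendsto (fun x => Phi x / √(log x)) atTop (nhds 1) :=
    (tendsto_div_sqrt_log_integralExpSq.comp tendsto_Phi_atTop).congr fun x => by
      simp only [Function.comp_apply, integralExpSq_Phi]
  have hd : Tendsto (fun x => 2 * x * Phi x * phi x) atTop (nhds 1) :=
    (key.comp tendsto_Phi_atTop).congr fun x => by
      simp only [Function.comp_apply, integralExpSq_Phi, phi]
      ring
  have hc : Tendsto (fun x => 2 * x * phi x * √(log x)) atTop (nhds 1) := by
    have h := hd.div hb one_ne_zero
    rw [div_one] at h
    refine h.congr' ((tendsto_Phi_atTop.eventually_gt_atTop 0).mono fun x hx => ?_)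
    rw [Pi.div_apply, div_div_eq_mul_div]
    field_simp [hx.ne']
  exact ⟨ha, hb, hc, hd⟩


end
end TF
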